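/- Let n ≥ 1 and let S ⊆ ℝⁿ be a measurable set whose standard Gaussian measure equals 2Φ(−C) for some C ≥ 0. Then ∫_S |x₁| dγ(x) ≤ 2φ(C). -/

import Mathlib

open MeasureTheory

/-- The standard Gaussian density `φ(x) = (1/√(2π)) e^{-x²/2}`. -/
noncomputable def gphi (x : ℝ) : ℝ := (Real.sqrt (2 * Real.pi))⁻¹ * Real.exp (-(x ^ 2) / 2)

/-- The standard Gaussian CDF `Φ(x) = ∫_{-∞}^x φ(t) dt`. -/
noncomputable def gPhi (x : ℝ) : ℝ := ∫ t in Set.Iic x, gphi t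

/-- The standard Gaussian measure on `ℝ^{n+1}`. -/
noncomputable def gauss (n : ℕ) : Measure (Fin (n + 1) → ℝ) :=
  Measure.pi fun _ => ProbabilityTheory.gaussianReal 0 1

/-- The multivariate probabilists' Hermite polynomial `He_α(x) = ∏ᵢ He_{αᵢ}(xᵢ)`. -/
noncomputable def hermiteProd {m : ℕ} (α : Fin m → ℕ) (x : Fin m → ℝ) : ℝ :=
  ∏ i, Polynomial.aeval (x i) (Polynomial.hermite (α i))

/-- The factorial of a multi-index, `α! = ∏ᵢ αᵢ!`. -/
def mfact {m : ℕ} (α : Fin m → ℕ) : ℕ := ∏ i, Nat.factorial (α i)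

/-- A Davie–Reeds strip pair in direction `x₁`, up to a `γ`-null set. -/
def StripPair (n : ℕ) (Cstar : ℝ) (f g : (Fin (n + 1) → ℝ) → ℝ) : Prop :=
  ∀ᵐ x ∂(gauss n),
    (Cstar ≤ x 0 → f x = 1 ∧ g x = 1) ∧
    (x 0 ≤ -Cstar → f x = -1 ∧ g x = -1) ∧
    (|x 0| < Cstar → g x = -f x)

open Set Filter

lemma gphi_eq : ProbabilityTheory.gaussianPDFReal 0 1 = gphi := by
  ext x
  simp [ProbabilityTheory.gaussianPDFReal, gphi]

lemma gphi_nonneg (x : ℝ) : 0 ≤ gphi x := by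
  have h := Real.sqrt_nonneg (2 * Real.pi)
  exact mul_nonneg (inv_nonneg.2 h) (Real.exp_pos _).le

lemma gphi_neg (x : ℝ) : gphi (-x) = gphi x := by simp [gphi]

lemma continuous_gphi : Continuous gphi := by
  unfold gphi; fun_prop

lemma gaussianReal_eq : ProbabilityTheory.gaussianReal 0 1
    = volume.withDensity (fun x => ENNReal.ofReal (gphi x)) := by
  rw [ProbabilityTheory.gaussianReal_of_var_ne_zero 0 one_ne_zero]
  congr 1
  ext x
  rw [ProbabilityTheory.gaussianPDF_def, gphi_eq]

lemma hasDerivAt_gphi (x : ℝ) : HasDerivAt gphi (-x * gphi x) x := by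
  have h : HasDerivAt (fun x : ℝ => -(x ^ 2) / 2) (-x) x := by
    have := ((hasDerivAt_pow 2 x).neg).div_const 2
    simpa using this.congr_deriv (by ring)
  have h2 := (h.exp).const_mul (Real.sqrt (2 * Real.pi))⁻¹
  unfold gphi
  exact h2.congr_deriv (by ring)

lemma tendsto_gphi_atTop : Tendsto gphi atTop (nhds 0) := by
  have h1 : Tendsto (fun x : ℝ => -(x ^ 2) / 2) atTop atBot := by
    apply Tendsto.atBot_div_const (by norm_num)
    exact tendsto_neg_atBot_iff.2 (tendsto_pow_atTop (by norm_num))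
  have := (Real.tendsto_exp_atBot).comp h1
  have h2 : Tendsto (fun x : ℝ => (Real.sqrt (2 * Real.pi))⁻¹ * Real.exp (-(x ^ 2) / 2)) atTop (nhds ((Real.sqrt (2 * Real.pi))⁻¹ * 0)) := this.const_mul _
  rw [mul_zero] at h2
  exact h2

lemma tendsto_gphi_atBot : Tendsto gphi atBot (nhds 0) := by
  have := tendsto_gphi_atTop.comp tendsto_neg_atBot_atTop
  simpa only [Function.comp_def, gphi_neg] using this

lemma integrable_gphi : Integrable gphi := by
  have := gphi_eq ▸ ProbabilityTheory.integrable_gaussianPDFReal 0 1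
  exact this

lemma integrable_mul_gphi : Integrable (fun x => x * gphi x) := by
  have h := integrable_mul_exp_neg_mul_sq (b := 1/2) (by norm_num)
  have h2 := h.const_mul (Real.sqrt (2 * Real.pi))⁻¹
  refine h2.congr ?_
  filter_upwards with x
  simp only [gphi]
  ring_nf

lemma integrableOn_mul_gphi (s : Set ℝ) : IntegrableOn (fun x => x * gphi x) s :=
  integrable_mul_gphi.integrableOn

lemma integral_Ioi_mul_gphi (C : ℝ) : ∫ t in Ioi C, t * gphi t = gphi C := by
  have h := integral_Ioi_of_hasDerivAt_of_tendsto' (f := fun t => -gphi t)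
    (f' := fun t => t * gphi t) (a := C) (m := 0)
    (fun x _ => by have := (hasDerivAt_gphi x).neg; simp only [neg_mul, neg_neg] at this; exact this)
    (integrableOn_mul_gphi _) (by simpa using tendsto_gphi_atTop.neg)
  simpa using h

lemma integral_Iic_neg_mul_gphi (C : ℝ) : ∫ t in Iic C, -t * gphi t = gphi C := by
  have h := integral_Iic_of_hasDerivAt_of_tendsto' (f := gphi)
    (f' := fun t => -t * gphi t) (a := C) (m := 0)
    (fun x _ => hasDerivAt_gphi x)
    ((integrable_mul_gphi.neg.congr (by filter_upwards with x; simp [neg_mul])).integrableOn)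
    tendsto_gphi_atBot
  simpa using h

lemma integral_Ioi_gphi (C : ℝ) : ∫ t in Ioi C, gphi t = gPhi (-C) := by
  rw [gPhi, ← integral_comp_neg_Ioi]
  simp [gphi_neg]

lemma integral_gaussianReal (g : ℝ → ℝ) :
    ∫ x, g x ∂(ProbabilityTheory.gaussianReal 0 1) = ∫ x, gphi x * g x := by
  rw [gaussianReal_eq]
  have heq : (fun x => ENNReal.ofReal (gphi x))
      = fun x => ((Real.toNNReal (gphi x)) : ENNReal) := rfl
  rw [heq, integral_withDensity_eq_integral_smul
    (continuous_gphi.measurable.real_toNNReal)]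
  congr 1
  ext x
  rw [NNReal.smul_def, smul_eq_mul, Real.coe_toNNReal _ (gphi_nonneg x)]

lemma integrable_gaussianReal_iff (g : ℝ → ℝ) :
    Integrable g (ProbabilityTheory.gaussianReal 0 1) ↔
      Integrable (fun x => gphi x * g x) volume := by
  rw [gaussianReal_eq]
  rw [integrable_withDensity_iff (continuous_gphi.measurable.ennreal_ofReal)
    (by filter_upwards with x; exact ENNReal.ofReal_lt_top)]
  refine integrable_congr ?_
  filter_upwards with x
  rw [ENNReal.toReal_ofReal (gphi_nonneg x), mul_comm]

lemma gPhi_nonneg (x : ℝ) : 0 ≤ gPhi x :=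
  setIntegral_nonneg measurableSet_Iic (fun t _ => gphi_nonneg t)

lemma key_integral (C : ℝ) (hC : 0 ≤ C) :
    ∫ t : ℝ, gphi t * max (|t| - C) 0 = 2 * (gphi C - C * gPhi (-C)) := by
  have hsplit : (fun t : ℝ => gphi t * max (|t| - C) 0)
      = (Iic (-C)).indicator (fun t => gphi t * (-t - C))
        + (Ioi C).indicator (fun t => gphi t * (t - C)) := by
    ext t
    simp only [Pi.add_apply, Set.indicator_apply, mem_Iic, mem_Ioi]
    rcases le_or_gt t (-C) with h1 | h1
    · rw [if_pos h1, if_neg (by linarith)]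
      have : |t| = -t := abs_of_nonpos (by linarith)
      rw [this, max_eq_left (by linarith)]
      ring
    · rw [if_neg (by linarith)]
      rcases le_or_gt t C with h2 | h2
      · rw [if_neg (by linarith)]
        have : max (|t| - C) 0 = 0 := max_eq_right (by
          have := abs_le.2 ⟨h1.le, h2⟩; linarith)
        rw [this]; ring
      · rw [if_pos h2]
        have : |t| = t := abs_of_nonneg (by linarith)
        rw [this, max_eq_left (by linarith)]
        ring
  rw [hsplit]
  have hint1 : IntegrableOn (fun t => gphi t * (-t - C)) (Iic (-C)) := by
    refine Integrable.integrableOn ?_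
    have := integrable_mul_gphi.neg.sub (integrable_gphi.const_mul C)
    refine this.congr ?_
    filter_upwards with x
    simp only [Pi.sub_apply, Pi.neg_apply]; ring
  have hint2 : IntegrableOn (fun t => gphi t * (t - C)) (Ioi C) := by
    refine Integrable.integrableOn ?_
    have := integrable_mul_gphi.sub (integrable_gphi.const_mul C)
    refine this.congr ?_
    filter_upwards with x
    simp only [Pi.sub_apply]; ring
  rw [show ((Iic (-C)).indicator fun t => gphi t * (-t - C)) + ((Ioi C).indicator fun t => gphi t * (t - C))
      = fun t => (Iic (-C)).indicator (fun t => gphi t * (-t - C)) t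
          + (Ioi C).indicator (fun t => gphi t * (t - C)) t from rfl]
  rw [integral_add
    (hint1.integrable_indicator measurableSet_Iic)
    (hint2.integrable_indicator measurableSet_Ioi),
    integral_indicator measurableSet_Iic, integral_indicator measurableSet_Ioi]
  have e1 : ∫ t in Iic (-C), gphi t * (-t - C) = gphi C - C * gPhi (-C) := by
    have h1 : IntegrableOn (fun t : ℝ => -t * gphi t) (Iic (-C)) :=
      (integrable_mul_gphi.neg.congr (by filter_upwards with x; simp [neg_mul])).integrableOn
    have h2 : IntegrableOn (fun t : ℝ => C * gphi t) (Iic (-C)) :=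
      (integrable_gphi.const_mul C).integrableOn
    have hsub := integral_sub h1 h2
    rw [show (fun t => gphi t * (-t - C)) = fun t => -t * gphi t - C * gphi t from by
      ext t; ring]
    rw [hsub, integral_Iic_neg_mul_gphi, gphi_neg, integral_const_mul]
    rfl
  have e2 : ∫ t in Ioi C, gphi t * (t - C) = gphi C - C * gPhi (-C) := by
    have h1 : IntegrableOn (fun t : ℝ => t * gphi t) (Ioi C) :=
      integrable_mul_gphi.integrableOn
    have h2 : IntegrableOn (fun t : ℝ => C * gphi t) (Ioi C) :=
      (integrable_gphi.const_mul C).integrableOn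
    have hsub := integral_sub h1 h2
    rw [show (fun t => gphi t * (t - C)) = fun t => t * gphi t - C * gphi t from by
      ext t; ring]
    rw [hsub, integral_Ioi_mul_gphi, integral_const_mul, integral_Ioi_gphi]
  rw [e1, e2]; ring

lemma gauss_map_eval (n : ℕ) :
    (gauss n).map (fun x => x 0) = ProbabilityTheory.gaussianReal 0 1 := by
  ext s hs
  rw [Measure.map_apply (measurable_pi_apply 0) hs]
  have hpre : (fun x : Fin (n + 1) → ℝ => x 0) ⁻¹' s
      = Set.pi Set.univ (Function.update (fun _ : Fin (n + 1) => (Set.univ : Set ℝ)) 0 s) := by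
    ext x
    simp only [mem_preimage, Set.mem_pi, mem_univ, forall_true_left]
    constructor
    · intro h i
      rcases eq_or_ne i 0 with rfl | hi
      · simpa using h
      · simp [Function.update_of_ne hi]
    · intro h
      simpa using h 0
  rw [hpre, gauss, Measure.pi_pi]
  rw [Finset.prod_eq_single 0 (fun i _ hi => by simp [Function.update_of_ne hi]) (by simp)]
  simp

lemma integral_eval (n : ℕ) (g : ℝ → ℝ) (hg : AEStronglyMeasurable g (ProbabilityTheory.gaussianReal 0 1)) :
    ∫ x, g (x 0) ∂(gauss n) = ∫ t, g t ∂(ProbabilityTheory.gaussianReal 0 1) := by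
  rw [← gauss_map_eval n, integral_map (measurable_pi_apply 0).aemeasurable]
  rw [gauss_map_eval]
  exact hg

lemma integrable_eval (n : ℕ) (g : ℝ → ℝ)
    (hg : AEStronglyMeasurable g (ProbabilityTheory.gaussianReal 0 1))
    (h : Integrable g (ProbabilityTheory.gaussianReal 0 1)) :
    Integrable (fun x => g (x 0)) (gauss n) := by
  have hmap := gauss_map_eval n
  have h2 : Integrable g ((gauss n).map (fun x => x 0)) := by rwa [hmap]
  have hg2 : AEStronglyMeasurable g ((gauss n).map (fun x => x 0)) := by rwa [hmap]
  exact (integrable_map_measure hg2 (measurable_pi_apply 0).aemeasurable).mp h2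

/-- If `γ(S) = 2Φ(−C)` then `∫_S |x₁| dγ ≤ 2φ(C)`. -/
theorem bathtub_bound (n : ℕ) (S : Set (Fin (n + 1) → ℝ)) (hS : MeasurableSet S)
    (C : ℝ) (hC : 0 ≤ C) (hmeas : gauss n S = ENNReal.ofReal (2 * gPhi (-C))) :
    ∫ x in S, |x 0| ∂gauss n ≤ 2 * gphi C := by
  haveI : IsProbabilityMeasure (gauss n) := by unfold gauss; infer_instance
  set g : ℝ → ℝ := fun t => max (|t| - C) 0 with hg_def
  have hg_cont : Continuous g := (continuous_abs.sub continuous_const).max continuous_const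
  have hg_nonneg : ∀ t, 0 ≤ g t := fun t => le_max_right _ _
  have hg_le : ∀ t, g t ≤ |t| := fun t => max_le (by linarith [abs_nonneg t]) (abs_nonneg t)
  -- integrability of g wrt gaussianReal
  have hgind : Integrable g (ProbabilityTheory.gaussianReal 0 1) := by
    rw [integrable_gaussianReal_iff]
    refine Integrable.mono' integrable_mul_gphi.abs
      (by exact (continuous_gphi.mul hg_cont).aestronglyMeasurable) ?_
    filter_upwards with x
    rw [Real.norm_eq_abs, abs_of_nonneg (mul_nonneg (gphi_nonneg x) (hg_nonneg x))]
    calc gphi x * g x ≤ gphi x * |x| := by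
          exact mul_le_mul_of_nonneg_left (hg_le x) (gphi_nonneg x)
      _ ≤ |x * gphi x| := by
          rw [abs_mul, abs_of_nonneg (gphi_nonneg x)]; ring_nf; exact le_refl _
  have hG : Integrable (fun x : Fin (n + 1) → ℝ => g (x 0)) (gauss n) :=
    integrable_eval n g hg_cont.aestronglyMeasurable hgind
  -- key value of the full integral
  have hval : ∫ x, g (x 0) ∂(gauss n) = 2 * (gphi C - C * gPhi (-C)) := by
    rw [integral_eval n g hg_cont.aestronglyMeasurable, integral_gaussianReal,
      key_integral C hC]
  -- measure of S
  have hSreal : (gauss n S).toReal = 2 * gPhi (-C) := by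
    rw [hmeas, ENNReal.toReal_ofReal (mul_nonneg (by norm_num) (gPhi_nonneg _))]
  -- pointwise bound
  have hpt : ∀ x : Fin (n + 1) → ℝ, |x 0| ≤ g (x 0) + C := fun x => by
    have := le_max_left (|x 0| - C) (0 : ℝ); simp only [hg_def]; linarith
  have hint_on : IntegrableOn (fun x : Fin (n + 1) → ℝ => g (x 0) + C) S (gauss n) :=
    (hG.add (integrable_const C)).integrableOn
  have habs : IntegrableOn (fun x : Fin (n + 1) → ℝ => |x 0|) S (gauss n) := by
    refine Integrable.mono' hint_on
      ((measurable_pi_apply 0).abs.aestronglyMeasurable) ?_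
    filter_upwards with x
    rw [Real.norm_eq_abs, abs_abs]
    exact hpt x
  have step1 : ∫ x in S, |x 0| ∂(gauss n) ≤ ∫ x in S, (g (x 0) + C) ∂(gauss n) :=
    setIntegral_mono_on habs hint_on hS (fun x _ => hpt x)
  have step2 : ∫ x in S, (g (x 0) + C) ∂(gauss n)
      = (∫ x in S, g (x 0) ∂(gauss n)) + (gauss n S).toReal * C := by
    rw [integral_add hG.integrableOn (integrable_const C).integrableOn,
      setIntegral_const, smul_eq_mul]
    rfl
  have step3 : ∫ x in S, g (x 0) ∂(gauss n) ≤ ∫ x, g (x 0) ∂(gauss n) :=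
    setIntegral_le_integral hG (by filter_upwards with x; exact hg_nonneg _)
  have hPhi := gPhi_nonneg (-C)
  calc ∫ x in S, |x 0| ∂(gauss n)
      ≤ (∫ x in S, g (x 0) ∂(gauss n)) + (gauss n S).toReal * C := by
        rw [← step2]; exact step1
    _ ≤ 2 * (gphi C - C * gPhi (-C)) + (2 * gPhi (-C)) * C := by
        rw [hSreal]; linarith [step3, hval.le, hval.ge]
    _ = 2 * gphi C := by ring
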